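/- Let λ < 0 with ‖(1,1)‖_m = 1, set Λ = −1/λ, and let β, γ > 0. Then there exist slowly varying functions l_A, l_B on [1,∞) such that q_A(t^β) = Λ − t^{λβ} l_A(t) and q_B(t^γ) = Λ − t^{λγ} l_B(t) for all t ≥ 1. Furthermore l_A(t) → Λ m₊^λ and l_B(t) → Λ m₋^λ as t → ∞. -/

import Mathlib

open MeasureTheory Filter Set

noncomputable section

/-- A positive function defined near `+∞` is slowly varying at infinity if
`L(at)/L(t) → 1` as `t → ∞` for every `a > 0`. -/
def SlowlyVarying (L : ℝ → ℝ) : Prop :=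
  (∀ᶠ t in atTop, 0 < L t) ∧
    ∀ a : ℝ, 0 < a → Tendsto (fun t => L (a * t) / L t) atTop (nhds 1)

/-- `N` is a norm on `ℝ²`, viewed as a two-argument function. -/
def IsNorm2 (N : ℝ → ℝ → ℝ) : Prop :=
  (∀ x y, 0 ≤ N x y) ∧ (∀ x y, N x y = 0 ↔ x = 0 ∧ y = 0) ∧
    (∀ c x y, N (c * x) (c * y) = |c| * N x y) ∧
    (∀ x₁ y₁ x₂ y₂, N (x₁ + x₂) (y₁ + y₂) ≤ N x₁ y₁ + N x₂ y₂)

/-- Condition (C1): symmetry of the norm. -/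
def CondC1 (N : ℝ → ℝ → ℝ) : Prop := ∀ x y, N x y = N y x

/-- Condition (C2): the norm dominates the sup-norm. -/
def CondC2 (N : ℝ → ℝ → ℝ) : Prop := ∀ x y : ℝ, max |x| |y| ≤ N x y

/-- Condition (C3): equality with the sup-norm off the diagonal. -/
def CondC3 (N : ℝ → ℝ → ℝ) : Prop :=
  ∃ x₀ y₀ : ℝ, 0 ≤ x₀ ∧ 0 ≤ y₀ ∧ x₀ ≠ y₀ ∧ N x₀ y₀ = max x₀ y₀

/-- τ(v) = ‖(v, 1−v)‖_m / v.  (At `v = 0` this real-valued version takes the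
junk value `0` instead of `+∞`; this is irrelevant for all integrals below,
which are taken against an atomless measure.) -/
def tau (N : ℝ → ℝ → ℝ) (v : ℝ) : ℝ := N v (1 - v) / v

/-- The probability measure associated with a distribution function `F_V` on
`[0,1]` that is continuous (no atoms) and strictly increasing (positive mass on
every nonempty open subinterval of `[0,1]`): Assumption 1. -/
def GoodMeasure (μ : Measure ℝ) : Prop :=
  μ ((Set.Icc (0:ℝ) 1)ᶜ) = 0 ∧ (∀ x : ℝ, μ {x} = 0) ∧
    ∀ a b : ℝ, 0 ≤ a → a < b → b ≤ 1 → 0 < μ (Set.Ioo a b)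

/-- The GP(1,λ) survivor function `(1 + λx)₊^{−1/λ}`, interpreted as `e^{−x}`
when `λ = 0`. -/
def gpTail (l x : ℝ) : ℝ :=
  if l = 0 then Real.exp (-x) else (max (1 + l * x) 0) ^ (-1 / l)

/-- Marginal survival function `S_A(x) = ∫₀¹ (1 + λ x τ(v))₊^{−1/λ} dF_V(v)`. -/
def survA (N : ℝ → ℝ → ℝ) (μ : Measure ℝ) (l x : ℝ) : ℝ :=
  ∫ v, gpTail l (x * tau N v) ∂μ

/-- Marginal survival function `S_B(y) = ∫₀¹ (1 + λ y τ(1−v))₊^{−1/λ} dF_V(v)`. -/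
def survB (N : ℝ → ℝ → ℝ) (μ : Measure ℝ) (l y : ℝ) : ℝ :=
  ∫ v, gpTail l (y * tau N (1 - v)) ∂μ

/-- Joint survival function
`S(x,y) = ∫₀¹ (1 + λ max{x τ(v), y τ(1−v)})₊^{−1/λ} dF_V(v)`. -/
def survJ (N : ℝ → ℝ → ℝ) (μ : Measure ℝ) (l x y : ℝ) : ℝ :=
  ∫ v, gpTail l (max (x * tau N v) (y * tau N (1 - v))) ∂μ

/-- `Ω₀ = {v ∈ [0,1] : τ(v) = 1}`. -/
def Omega0 (N : ℝ → ℝ → ℝ) : Set ℝ := {v | v ∈ Set.Icc (0:ℝ) 1 ∧ tau N v = 1}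

/-- `v′ = inf Ω₀`. -/
def vlo (N : ℝ → ℝ → ℝ) : ℝ := sInf (Omega0 N)

/-- `v″ = sup Ω₀`. -/
def vhi (N : ℝ → ℝ → ℝ) : ℝ := sSup (Omega0 N)

/-- The distribution function `F_V(x) = μ(−∞, x]`. -/
def Fdist (μ : Measure ℝ) (x : ℝ) : ℝ := (μ (Set.Iic x)).toReal

/-- `m₊ = F_V(v″) − F_V(v′)`. -/
def mPlus (N : ℝ → ℝ → ℝ) (μ : Measure ℝ) : ℝ := Fdist μ (vhi N) - Fdist μ (vlo N)

/-- `m₋ = F_V(1−v′) − F_V(1−v″)`. -/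
def mMinus (N : ℝ → ℝ → ℝ) (μ : Measure ℝ) : ℝ :=
  Fdist μ (1 - vlo N) - Fdist μ (1 - vhi N)

/-!
By (C2), `τ ≥ 1`, and `Ω₀ = {τ = 1}` is the zero set in `[0,1]` of the nonnegative convex function
`v ↦ ‖(v, 1-v)‖_m - v`, hence an interval; it starts at `1/2` because `‖(1,1)‖_m = 1`, and (C3)
makes it nondegenerate, so it carries mass `m₊ > 0`. For `x` just below the end `Λ = -1/λ` of the
support, every `v` with `τ(v) > 1` already has `x τ(v) ≥ Λ`, so only `Ω₀` contributes to `S_A(x)`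
and, by dominated convergence, `S_A(x) ~ m₊ (1 + λx)^Λ`. Inverting `S_A(q_A(u)) = 1/u` gives
`(Λ - q_A(u)) / u^λ → Λ m₊^λ`, so `l_A(t) = (Λ - q_A(t^β)) / t^{λβ}` has a positive limit and is
therefore slowly varying. The `B` side is the same with `v ↦ 1 - v`.
-/

open scoped Topology

lemma slowlyVarying_of_tendsto {L : ℝ → ℝ} {c : ℝ} (hL : Tendsto L atTop (𝓝 c)) (hc : 0 < c) :
    SlowlyVarying L := by
  refine ⟨hL.eventually_const_lt hc, fun a ha => ?_⟩
  have h := (hL.comp (tendsto_id.const_mul_atTop ha)).div hL hc.ne'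
  rwa [div_self hc.ne'] at h

lemma exists_slowlyVarying_of_tendsto_sub_div_rpow {q : ℝ → ℝ} {a c l β : ℝ} (hβ : 0 < β)
    (hq : ∀ u, 1 ≤ u → q u < a) (hlim : Tendsto (fun u => (a - q u) / u ^ l) atTop (𝓝 c))
    (hc : 0 < c) :
    ∃ L : ℝ → ℝ, (∀ t, 1 ≤ t → 0 < L t) ∧ SlowlyVarying L ∧
      (∀ t, 1 ≤ t → q (t ^ β) = a - t ^ (l * β) * L t) ∧ Tendsto L atTop (𝓝 c) := by
  have hL : Tendsto (fun t => (a - q (t ^ β)) / t ^ (l * β)) atTop (𝓝 c) := by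
    refine (hlim.comp (tendsto_rpow_atTop hβ)).congr' ?_
    filter_upwards [eventually_gt_atTop 0] with t ht
    rw [Function.comp_apply, ← Real.rpow_mul ht.le, mul_comm]
  refine ⟨_, fun t ht => ?_, slowlyVarying_of_tendsto hL hc, fun t ht => ?_, hL⟩
  · exact div_pos (sub_pos.2 (hq _ (Real.one_le_rpow ht hβ.le)))
      (Real.rpow_pos_of_pos (by linarith) _)
  · rw [mul_div_cancel₀ _ (Real.rpow_pos_of_pos (by linarith) _).ne']
    ring

section gpTail

variable {l : ℝ}

lemma gpTail_of_ne_zero (hl : l ≠ 0) (z : ℝ) : gpTail l z = max (1 + l * z) 0 ^ (-1 / l) :=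
  if_neg hl

lemma gpTail_nonneg (hl : l ≠ 0) (z : ℝ) : 0 ≤ gpTail l z := by
  rw [gpTail_of_ne_zero hl]
  exact Real.rpow_nonneg (le_max_right _ _) _

lemma neg_one_div_pos (hl : l < 0) : 0 < -1 / l :=
  div_pos_of_neg_of_neg neg_one_lt_zero hl

lemma gpTail_le_one (hl : l < 0) {z : ℝ} (hz : 0 ≤ z) : gpTail l z ≤ 1 := by
  rw [gpTail_of_ne_zero hl.ne]
  refine Real.rpow_le_one (le_max_right _ _) (max_le ?_ zero_le_one) (neg_one_div_pos hl).le
  nlinarith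

lemma gpTail_antitone (hl : l < 0) : Antitone (gpTail l) := fun z z' h => by
  simp only [gpTail_of_ne_zero hl.ne]
  refine Real.rpow_le_rpow (le_max_right _ _) (max_le_max_right _ ?_) (neg_one_div_pos hl).le
  nlinarith

lemma gpTail_eq_zero (hl : l < 0) {z : ℝ} (hz : -1 / l ≤ z) : gpTail l z = 0 := by
  have h : 1 + l * z ≤ 0 := by
    have := mul_le_mul_of_nonpos_left hz hl.le
    rw [mul_div_cancel₀ _ hl.ne] at this
    linarith
  rw [gpTail_of_ne_zero hl.ne, max_eq_right h, Real.zero_rpow (neg_one_div_pos hl).ne']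

lemma one_add_mul_nonneg_of_le (hl : l < 0) {x : ℝ} (hx : x ≤ -1 / l) : 0 ≤ 1 + l * x := by
  have := mul_le_mul_of_nonpos_left hx hl.le
  rw [mul_div_cancel₀ _ hl.ne] at this
  linarith

lemma one_add_mul_pos_of_lt (hl : l < 0) {x : ℝ} (hx : x < -1 / l) : 0 < 1 + l * x := by
  have := mul_lt_mul_of_neg_left hx hl
  rw [mul_div_cancel₀ _ hl.ne] at this
  linarith

lemma gpTail_of_le (hl : l < 0) {x : ℝ} (hx : x ≤ -1 / l) :
    gpTail l x = (1 + l * x) ^ (-1 / l) := by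
  rw [gpTail_of_ne_zero hl.ne, max_eq_left (one_add_mul_nonneg_of_le hl hx)]

lemma continuous_gpTail (hl : l < 0) : Continuous (gpTail l) := by
  simp only [funext (gpTail_of_ne_zero hl.ne)]
  exact (by fun_prop : Continuous fun z => max (1 + l * z) 0).rpow_const
    fun _ => Or.inr (neg_one_div_pos hl).le

lemma tendsto_gpTail_mul_div_rpow (hl : l < 0) {t : ℝ} (ht : 1 ≤ t) :
    Tendsto (fun x => gpTail l (x * t) / (1 + l * x) ^ (-1 / l)) (𝓝[<] (-1 / l))
      (𝓝 (if t = 1 then 1 else 0)) := by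
  split_ifs with h
  · refine tendsto_const_nhds.congr' ?_
    filter_upwards [self_mem_nhdsWithin] with x (hx : x < -1 / l)
    rw [h, mul_one, gpTail_of_le hl hx.le,
      div_self (Real.rpow_pos_of_pos (one_add_mul_pos_of_lt hl hx) _).ne']
  · have ht' : 1 < t := lt_of_le_of_ne ht (Ne.symm h)
    have hlt : -1 / l / t < -1 / l := div_lt_self (neg_one_div_pos hl) ht'
    refine tendsto_const_nhds.congr' ?_
    filter_upwards [Ioo_mem_nhdsLT hlt] with x ⟨hx, _⟩
    rw [div_lt_iff₀ (by linarith)] at hx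
    rw [gpTail_eq_zero hl hx.le, zero_div]

end gpTail

section Quantile

variable {α : Type*} [MeasurableSpace α] {μ : Measure α} {l : ℝ} {T : α → ℝ} {q : ℝ → ℝ}

lemma integrable_gpTail_mul [IsFiniteMeasure μ] (hl : l < 0) (hT : Measurable T)
    (hT1 : ∀ᵐ v ∂μ, 1 ≤ T v) {x : ℝ} (hx : 0 ≤ x) :
    Integrable (fun v => gpTail l (x * T v)) μ := by
  refine (integrable_const 1).mono'
    ((continuous_gpTail hl).measurable.comp (hT.const_mul x)).aestronglyMeasurable ?_
  filter_upwards [hT1] with v hv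
  rw [Real.norm_of_nonneg (gpTail_nonneg hl.ne _)]
  exact gpTail_le_one hl (mul_nonneg hx (by linarith))

lemma integral_gpTail_mul_eq_zero (hl : l < 0) (hT1 : ∀ᵐ v ∂μ, 1 ≤ T v) {x : ℝ}
    (hx : -1 / l ≤ x) : ∫ v, gpTail l (x * T v) ∂μ = 0 := by
  refine integral_eq_zero_of_ae ?_
  filter_upwards [hT1] with v hv
  exact gpTail_eq_zero hl (hx.trans (le_mul_of_one_le_right ((neg_one_div_pos hl).le.trans hx) hv))

lemma antitoneOn_integral_gpTail_mul [IsFiniteMeasure μ] (hl : l < 0) (hT : Measurable T)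
    (hT1 : ∀ᵐ v ∂μ, 1 ≤ T v) : AntitoneOn (fun x => ∫ v, gpTail l (x * T v) ∂μ) (Ici 0) := by
  intro x (hx : 0 ≤ x) x' _ hxx'
  refine integral_mono_ae (integrable_gpTail_mul hl hT hT1 (hx.trans hxx'))
    (integrable_gpTail_mul hl hT hT1 hx) ?_
  filter_upwards [hT1] with v hv
  exact gpTail_antitone hl (mul_le_mul_of_nonneg_right hxx' (by linarith))

lemma measureReal_mul_rpow_le_integral_gpTail [IsFiniteMeasure μ] (hl : l < 0)
    (hT : Measurable T) (hT1 : ∀ᵐ v ∂μ, 1 ≤ T v) {x : ℝ} (hx : 0 ≤ x) (hxl : x ≤ -1 / l) :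
    μ.real {v | T v = 1} * (1 + l * x) ^ (-1 / l) ≤ ∫ v, gpTail l (x * T v) ∂μ := by
  have hE : MeasurableSet {v | T v = 1} := hT (measurableSet_singleton 1)
  rw [← smul_eq_mul, ← integral_indicator_const _ hE]
  refine integral_mono ((integrable_const _).indicator hE)
    (integrable_gpTail_mul hl hT hT1 hx) fun v => ?_
  by_cases hv : T v = 1
  · simp [hv, gpTail_of_le hl hxl]
  · simp [hv, gpTail_nonneg hl.ne]

lemma tendsto_integral_gpTail_mul_div_rpow [IsFiniteMeasure μ] (hl : l < 0) (hT : Measurable T)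
    (hT1 : ∀ᵐ v ∂μ, 1 ≤ T v) :
    Tendsto (fun x => (∫ v, gpTail l (x * T v) ∂μ) / (1 + l * x) ^ (-1 / l)) (𝓝[<] (-1 / l))
      (𝓝 (μ.real {v | T v = 1})) := by
  have hE : MeasurableSet {v | T v = 1} := hT (measurableSet_singleton 1)
  have hind : (fun v => if T v = 1 then (1 : ℝ) else 0) = {v | T v = 1}.indicator 1 := by
    ext v
    simp [Set.indicator_apply]
  simp only [← integral_div]
  rw [← integral_indicator_one hE, ← hind]
  refine tendsto_integral_filter_of_dominated_convergence (fun _ => 1)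
    (Eventually.of_forall fun x => ?_) ?_ (integrable_const 1)
    (hT1.mono fun v hv => tendsto_gpTail_mul_div_rpow hl hv)
  · exact (((continuous_gpTail hl).measurable.comp
      (hT.const_mul x)).div_const _).aestronglyMeasurable
  · filter_upwards [Ioo_mem_nhdsLT (neg_one_div_pos hl)] with x ⟨hx0, hxl⟩
    filter_upwards [hT1] with v hv
    have hpos : 0 < (1 + l * x) ^ (-1 / l) :=
      Real.rpow_pos_of_pos (one_add_mul_pos_of_lt hl hxl) _
    rw [Real.norm_of_nonneg (div_nonneg (gpTail_nonneg hl.ne _) hpos.le), div_le_one hpos,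
      ← gpTail_of_le hl hxl.le]
    exact gpTail_antitone hl (le_mul_of_one_le_right hx0.le hv)

lemma quantile_lt_neg_one_div (hl : l < 0) (hT1 : ∀ᵐ v ∂μ, 1 ≤ T v)
    (hq : ∀ u, 1 ≤ u → 0 ≤ q u ∧ ∫ v, gpTail l (q u * T v) ∂μ = 1 / u) {u : ℝ} (hu : 1 ≤ u) :
    q u < -1 / l := by
  by_contra! h
  have hS := (hq u hu).2
  rw [integral_gpTail_mul_eq_zero hl hT1 h] at hS
  exact (one_div_pos.2 (zero_lt_one.trans_le hu)).ne hS

lemma tendsto_quantile [IsFiniteMeasure μ] (hl : l < 0) (hT : Measurable T)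
    (hT1 : ∀ᵐ v ∂μ, 1 ≤ T v) (hm : 0 < μ.real {v | T v = 1})
    (hq : ∀ u, 1 ≤ u → 0 ≤ q u ∧ ∫ v, gpTail l (q u * T v) ∂μ = 1 / u) :
    Tendsto q atTop (𝓝[<] (-1 / l)) := by
  have hlt : ∀ᶠ u in atTop, q u < -1 / l :=
    (eventually_ge_atTop 1).mono fun u hu => quantile_lt_neg_one_div hl hT1 hq hu
  refine tendsto_nhdsWithin_iff.2 ⟨tendsto_order.2 ⟨fun a ha => ?_, fun a ha => ?_⟩, hlt⟩
  · set a' := max a 0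
    have ha' : a' < -1 / l := max_lt ha (neg_one_div_pos hl)
    set c := μ.real {v | T v = 1} * (1 + l * a') ^ (-1 / l)
    have hc : 0 < c := mul_pos hm (Real.rpow_pos_of_pos (one_add_mul_pos_of_lt hl ha') _)
    filter_upwards [eventually_gt_atTop (1 / c), eventually_ge_atTop 1] with u hu hu1
    by_contra! hqa
    have hS : c ≤ 1 / u := calc
      c ≤ ∫ v, gpTail l (a' * T v) ∂μ :=
        measureReal_mul_rpow_le_integral_gpTail hl hT hT1 (le_max_right a 0) ha'.le
      _ ≤ ∫ v, gpTail l (q u * T v) ∂μ := antitoneOn_integral_gpTail_mul hl hT hT1 (hq u hu1).1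
        (le_max_right a 0) (hqa.trans (le_max_left a 0))
      _ = 1 / u := (hq u hu1).2
    exact hu.not_ge ((le_one_div hc (by linarith)).1 hS)
  · exact hlt.mono fun u hu => hu.trans ha

lemma tendsto_sub_quantile_div_rpow [IsFiniteMeasure μ] (hl : l < 0) (hT : Measurable T)
    (hT1 : ∀ᵐ v ∂μ, 1 ≤ T v) (hm : 0 < μ.real {v | T v = 1})
    (hq : ∀ u, 1 ≤ u → 0 ≤ q u ∧ ∫ v, gpTail l (q u * T v) ∂μ = 1 / u) :
    Tendsto (fun u => (-1 / l - q u) / u ^ l) atTop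
      (𝓝 (-1 / l * μ.real {v | T v = 1} ^ l)) := by
  have hratio : Tendsto (fun u => 1 / u / (1 + l * q u) ^ (-1 / l)) atTop
      (𝓝 (μ.real {v | T v = 1})) := by
    refine ((tendsto_integral_gpTail_mul_div_rpow hl hT hT1).comp
      (tendsto_quantile hl hT hT1 hm hq)).congr' ?_
    filter_upwards [eventually_ge_atTop 1] with u hu
    simp only [Function.comp_apply, (hq u hu).2]
  refine ((hratio.rpow_const (Or.inl hm.ne')).const_mul (-1 / l)).congr' ?_
  filter_upwards [eventually_ge_atTop 1] with u hu
  have hu0 : 0 < u := by linarith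
  have hb : 0 < 1 + l * q u :=
    one_add_mul_pos_of_lt hl (quantile_lt_neg_one_div hl hT1 hq hu)
  have hexp : -1 / l * l = -1 := by field_simp [hl.ne]
  rw [Real.div_rpow (by positivity) (by positivity), ← Real.rpow_mul hb.le, hexp,
    Real.rpow_neg_one, one_div, Real.inv_rpow hu0.le]
  have := (Real.rpow_pos_of_pos hu0 l).ne'
  field_simp [hl.ne]
  ring

lemma exists_slowlyVarying_quantile_expansion [IsFiniteMeasure μ] (hl : l < 0)
    (hT : Measurable T) (hT1 : ∀ᵐ v ∂μ, 1 ≤ T v) (hm : 0 < μ.real {v | T v = 1}) {β : ℝ}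
    (hβ : 0 < β) (hq : ∀ u, 1 ≤ u → 0 ≤ q u ∧ ∫ v, gpTail l (q u * T v) ∂μ = 1 / u) :
    ∃ L : ℝ → ℝ, (∀ t, 1 ≤ t → 0 < L t) ∧ SlowlyVarying L ∧
      (∀ t, 1 ≤ t → q (t ^ β) = -1 / l - t ^ (l * β) * L t) ∧
      Tendsto L atTop (𝓝 (-1 / l * μ.real {v | T v = 1} ^ l)) :=
  exists_slowlyVarying_of_tendsto_sub_div_rpow hβ
    (fun _ => quantile_lt_neg_one_div hl hT1 hq)
    (tendsto_sub_quantile_div_rpow hl hT hT1 hm hq)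
    (mul_pos (neg_one_div_pos hl) (Real.rpow_pos_of_pos hm _))

end Quantile

section Norm

variable {N : ℝ → ℝ → ℝ}

lemma IsNorm2.convexOn_apply_one_sub (hN : IsNorm2 N) : ConvexOn ℝ univ fun v => N v (1 - v) := by
  refine ⟨convex_univ, fun x _ y _ a b ha hb hab => ?_⟩
  obtain ⟨-, -, hhom, hadd⟩ := hN
  have h1 : 1 - (a • x + b • y) = a * (1 - x) + b * (1 - y) := by
    simp only [smul_eq_mul]
    linear_combination -hab
  calc N (a • x + b • y) (1 - (a • x + b • y))
      = N (a * x + b * y) (a * (1 - x) + b * (1 - y)) := by rw [h1]; rfl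
    _ ≤ N (a * x) (a * (1 - x)) + N (b * y) (b * (1 - y)) := hadd _ _ _ _
    _ = a • N x (1 - x) + b • N y (1 - y) := by
      rw [hhom, hhom, abs_of_nonneg ha, abs_of_nonneg hb]; rfl

lemma IsNorm2.continuous_apply_one_sub (hN : IsNorm2 N) : Continuous fun v => N v (1 - v) :=
  continuousOn_univ.1 (hN.convexOn_apply_one_sub.continuousOn isOpen_univ)

lemma one_le_tau (hC2 : CondC2 N) {v : ℝ} (hv : 0 < v) : 1 ≤ tau N v := by
  rw [tau, le_div_iff₀ hv, one_mul]
  exact (le_abs_self v).trans ((le_max_left _ _).trans (hC2 v (1 - v)))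

lemma Omega0_eq (hC2 : CondC2 N) : Omega0 N = {v ∈ Icc 0 1 | N v (1 - v) - v ≤ 0} := by
  ext v
  refine and_congr_right fun hv => ?_
  have hge := hC2 v (1 - v)
  rcases hv.1.eq_or_lt with rfl | hv0
  · simp only [tau, sub_zero, div_zero, zero_ne_one, false_iff, not_le]
    simp only [abs_zero, sub_zero, abs_one] at hge
    linarith [le_max_right (0 : ℝ) 1]
  · rw [abs_of_pos hv0] at hge
    rw [tau, div_eq_one_iff_eq hv0.ne']
    constructor
    · intro h
      linarith
    · intro h
      linarith [le_max_left v |1 - v|]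

lemma convex_Omega0 (hN : IsNorm2 N) (hC2 : CondC2 N) : Convex ℝ (Omega0 N) := by
  rw [Omega0_eq hC2]
  exact ((hN.convexOn_apply_one_sub.subset (subset_univ _) (convex_Icc 0 1)).sub
    (concaveOn_id (convex_Icc 0 1))).convex_le 0

lemma Omega0_subset_Icc (hC2 : CondC2 N) : Omega0 N ⊆ Icc (1 / 2) 1 := by
  intro v hv
  rw [Omega0_eq hC2] at hv
  obtain ⟨⟨-, hv1⟩, hle⟩ := hv
  have := (le_abs_self (1 - v)).trans ((le_max_right _ _).trans (hC2 v (1 - v)))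
  exact ⟨by linarith, hv1⟩

lemma half_mem_Omega0 (hN : IsNorm2 N) (hN11 : N 1 1 = 1) : 1 / 2 ∈ Omega0 N := by
  have h := hN.2.2.1 (1 / 2) 1 1
  norm_num [hN11] at h
  refine ⟨⟨by norm_num, by norm_num⟩, ?_⟩
  norm_num [tau, h]

/-- Rescale the point given by (C3) onto the segment `x + y = 1`. -/
lemma exists_mem_Omega0_gt_half (hN : IsNorm2 N) (hC1 : CondC1 N) (hC3 : CondC3 N) :
    ∃ w ∈ Omega0 N, 1 / 2 < w := by
  suffices key : ∀ a b : ℝ, 0 ≤ b → b < a → N a b = a → ∃ w ∈ Omega0 N, 1 / 2 < w by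
    obtain ⟨x₀, y₀, hx₀, hy₀, hne, hmax⟩ := hC3
    rcases hne.lt_or_gt with h | h
    · exact key y₀ x₀ hx₀ h (by rw [← hC1, hmax, max_eq_right h.le])
    · exact key x₀ y₀ hy₀ h (by rw [hmax, max_eq_left h.le])
  intro a b hb hba hNab
  have ha : 0 < a := hb.trans_lt hba
  have hs : 0 < a + b := by linarith
  have hscale : N (a / (a + b)) (1 - a / (a + b)) = a / (a + b) := by
    have h := hN.2.2.1 (1 / (a + b)) a b
    rw [hNab, abs_of_pos (one_div_pos.2 hs)] at h
    convert h using 2 <;> field_simp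
    ring
  refine ⟨a / (a + b), ⟨⟨(div_pos ha hs).le, by rw [div_le_one hs]; linarith⟩, ?_⟩, ?_⟩
  · rw [tau, hscale, div_self (div_pos ha hs).ne']
  · rw [lt_div_iff₀ hs]
    linarith

lemma bddBelow_Omega0 : BddBelow (Omega0 N) :=
  bddBelow_Icc.mono fun _ hv => hv.1

lemma bddAbove_Omega0 : BddAbove (Omega0 N) :=
  bddAbove_Icc.mono fun _ hv => hv.1

lemma Ioo_vlo_vhi_subset_Omega0 (hN : IsNorm2 N) (hC2 : CondC2 N) (hN11 : N 1 1 = 1) :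
    Ioo (vlo N) (vhi N) ⊆ Omega0 N :=
  IsConnected.Ioo_csInf_csSup_subset
    ⟨⟨1 / 2, half_mem_Omega0 hN hN11⟩, (convex_Omega0 hN hC2).isPreconnected⟩
    bddBelow_Omega0 bddAbove_Omega0

lemma Omega0_subset_Icc_vlo_vhi : Omega0 N ⊆ Icc (vlo N) (vhi N) :=
  subset_Icc_csInf_csSup bddBelow_Omega0 bddAbove_Omega0

lemma vlo_eq_half (hN : IsNorm2 N) (hC2 : CondC2 N) (hN11 : N 1 1 = 1) : vlo N = 1 / 2 :=
  IsLeast.csInf_eq ⟨half_mem_Omega0 hN hN11, fun _ hv => (Omega0_subset_Icc hC2 hv).1⟩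

lemma vhi_le_one (hN : IsNorm2 N) (hN11 : N 1 1 = 1) : vhi N ≤ 1 :=
  csSup_le ⟨1 / 2, half_mem_Omega0 hN hN11⟩ fun _ hv => hv.1.2

lemma vlo_le_vhi (hN : IsNorm2 N) (hN11 : N 1 1 = 1) : vlo N ≤ vhi N :=
  csInf_le_csSup ⟨1 / 2, half_mem_Omega0 hN hN11⟩ bddBelow_Omega0 bddAbove_Omega0

lemma half_lt_vhi (hN : IsNorm2 N) (hC1 : CondC1 N) (hC3 : CondC3 N) : 1 / 2 < vhi N := by
  obtain ⟨w, hw, hw_gt⟩ := exists_mem_Omega0_gt_half hN hC1 hC3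
  exact hw_gt.trans_le (le_csSup bddAbove_Omega0 hw)

end Norm

section Measure

variable {μ : Measure ℝ}

lemma GoodMeasure.ae_mem_Icc (hμ : GoodMeasure μ) : ∀ᵐ v ∂μ, v ∈ Icc (0 : ℝ) 1 :=
  ae_iff.2 hμ.1

lemma GoodMeasure.ae_pos (hμ : GoodMeasure μ) : ∀ᵐ v ∂μ, 0 < v := by
  filter_upwards [hμ.ae_mem_Icc, measure_eq_zero_iff_ae_notMem.1 (hμ.2.1 0)] with v hv hv0
  exact lt_of_le_of_ne hv.1 (Ne.symm hv0)

lemma GoodMeasure.ae_lt_one (hμ : GoodMeasure μ) : ∀ᵐ v ∂μ, v < 1 := by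
  filter_upwards [hμ.ae_mem_Icc, measure_eq_zero_iff_ae_notMem.1 (hμ.2.1 1)] with v hv hv1
  exact lt_of_le_of_ne hv.2 hv1

lemma measure_eq_measure_Ioc_of_Ioo_subset_of_subset_Icc (hμ : ∀ x, μ {x} = 0) {a b : ℝ}
    {E : Set ℝ} (h₁ : Ioo a b ⊆ E) (h₂ : E ⊆ Icc a b) : μ E = μ (Ioc a b) := by
  rw [measure_congr (Ioc_ae_eq_Icc' (hμ a))]
  refine le_antisymm (measure_mono h₂) ?_
  rw [← measure_congr (Ioo_ae_eq_Icc' (hμ a) (hμ b))]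
  exact measure_mono h₁

lemma measureReal_Ioc_eq_Fdist_sub [IsFiniteMeasure μ] {a b : ℝ} (hab : a ≤ b) :
    μ.real (Ioc a b) = Fdist μ b - Fdist μ a := by
  rw [← Iic_sdiff_Iic, measureReal_sdiff (Iic_subset_Iic.2 hab) measurableSet_Iic]
  rfl

lemma GoodMeasure.measureReal_Ioc_pos [IsFiniteMeasure μ] (hμ : GoodMeasure μ) {a b : ℝ}
    (ha : 0 ≤ a) (hab : a < b) (hb : b ≤ 1) : 0 < μ.real (Ioc a b) :=
  ENNReal.toReal_pos ((hμ.2.2 a b ha hab hb).trans_le (measure_mono Ioo_subset_Ioc_self)).ne'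
    (measure_ne_top _ _)

variable {N : ℝ → ℝ → ℝ}

lemma measureReal_setOf_tau_eq_one [IsFiniteMeasure μ] (hμ : GoodMeasure μ) (hN : IsNorm2 N)
    (hC2 : CondC2 N) (hN11 : N 1 1 = 1) : μ.real {v | tau N v = 1} = mPlus N μ := by
  rw [mPlus, ← measureReal_Ioc_eq_Fdist_sub (vlo_le_vhi hN hN11), measureReal_def,
    ← measure_inter_conull hμ.1, inter_comm]
  exact congrArg ENNReal.toReal (measure_eq_measure_Ioc_of_Ioo_subset_of_subset_Icc hμ.2.1
    (Ioo_vlo_vhi_subset_Omega0 hN hC2 hN11) Omega0_subset_Icc_vlo_vhi)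

lemma measureReal_setOf_tau_one_sub_eq_one [IsFiniteMeasure μ] (hμ : GoodMeasure μ)
    (hN : IsNorm2 N) (hC2 : CondC2 N) (hN11 : N 1 1 = 1) :
    μ.real {v | tau N (1 - v) = 1} = mMinus N μ := by
  have hpre : Icc 0 1 ∩ {v | tau N (1 - v) = 1} = (fun v => 1 - v) ⁻¹' Omega0 N := by
    ext v
    simp only [Omega0, mem_inter_iff, mem_preimage, mem_ofPred_eq, mem_Icc]
    constructor <;> rintro ⟨⟨h₀, h₁⟩, h⟩ <;> exact ⟨⟨by linarith, by linarith⟩, h⟩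
  rw [mMinus, ← measureReal_Ioc_eq_Fdist_sub (by linarith [vlo_le_vhi hN hN11]),
    measureReal_def, ← measure_inter_conull hμ.1, inter_comm, hpre]
  refine congrArg ENNReal.toReal
    (measure_eq_measure_Ioc_of_Ioo_subset_of_subset_Icc hμ.2.1 ?_ ?_)
  · rw [← preimage_const_sub_Ioo]
    exact preimage_mono (Ioo_vlo_vhi_subset_Omega0 hN hC2 hN11)
  · rw [← preimage_const_sub_Icc]
    exact preimage_mono Omega0_subset_Icc_vlo_vhi

lemma mPlus_pos [IsFiniteMeasure μ] (hμ : GoodMeasure μ) (hN : IsNorm2 N) (hC1 : CondC1 N)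
    (hC2 : CondC2 N) (hC3 : CondC3 N) (hN11 : N 1 1 = 1) : 0 < mPlus N μ := by
  have hvlo := vlo_eq_half hN hC2 hN11
  rw [mPlus, ← measureReal_Ioc_eq_Fdist_sub (vlo_le_vhi hN hN11)]
  exact hμ.measureReal_Ioc_pos (by linarith) (by linarith [half_lt_vhi hN hC1 hC3])
    (vhi_le_one hN hN11)

lemma mMinus_pos [IsFiniteMeasure μ] (hμ : GoodMeasure μ) (hN : IsNorm2 N) (hC1 : CondC1 N)
    (hC2 : CondC2 N) (hC3 : CondC3 N) (hN11 : N 1 1 = 1) : 0 < mMinus N μ := by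
  have hvlo := vlo_eq_half hN hC2 hN11
  have hvhi := half_lt_vhi hN hC1 hC3
  have hvhi₁ := vhi_le_one hN hN11
  rw [mMinus, ← measureReal_Ioc_eq_Fdist_sub (by linarith)]
  exact hμ.measureReal_Ioc_pos (by linarith) (by linarith) (by linarith)

end Measure

/-- Proposition 9: for `λ < 0` with `‖(1,1)‖_m = 1`,
`Λ = −1/λ`, and `β, γ > 0`, there exist slowly varying `l_A, l_B` on `[1,∞)`
with `q_A(t^β) = Λ − t^{λβ} l_A(t)`, `q_B(t^γ) = Λ − t^{λγ} l_B(t)` for all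
`t ≥ 1`, and `l_A(t) → Λ m₊^λ`, `l_B(t) → Λ m₋^λ` as `t → ∞`. -/
theorem stmt7 (N : ℝ → ℝ → ℝ) (hN : IsNorm2 N) (hC1 : CondC1 N) (hC2 : CondC2 N)
    (hC3 : CondC3 N) (μ : Measure ℝ) [IsProbabilityMeasure μ] (hμ : GoodMeasure μ)
    (l β γ : ℝ) (hl : l < 0) (hN11 : N 1 1 = 1) (hβ : 0 < β) (hγ : 0 < γ)
    (qA qB : ℝ → ℝ)
    (hqA : ∀ t : ℝ, 1 ≤ t → 0 ≤ qA t ∧ survA N μ l (qA t) = 1 / t)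
    (hqB : ∀ t : ℝ, 1 ≤ t → 0 ≤ qB t ∧ survB N μ l (qB t) = 1 / t) :
    ∃ lA lB : ℝ → ℝ,
      (∀ t : ℝ, 1 ≤ t → 0 < lA t) ∧ (∀ t : ℝ, 1 ≤ t → 0 < lB t) ∧
      SlowlyVarying lA ∧ SlowlyVarying lB ∧
      (∀ t : ℝ, 1 ≤ t → qA (t ^ β) = -1 / l - t ^ (l * β) * lA t) ∧
      (∀ t : ℝ, 1 ≤ t → qB (t ^ γ) = -1 / l - t ^ (l * γ) * lB t) ∧
      Tendsto lA atTop (nhds (-1 / l * mPlus N μ ^ l)) ∧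
      Tendsto lB atTop (nhds (-1 / l * mMinus N μ ^ l)) := by
  have hmA := measureReal_setOf_tau_eq_one hμ hN hC2 hN11
  have hmB := measureReal_setOf_tau_one_sub_eq_one hμ hN hC2 hN11
  have hτ : Measurable (tau N) := hN.continuous_apply_one_sub.measurable.div measurable_id
  obtain ⟨lA, hlA_pos, hlA_sv, hqA_eq, hlA_lim⟩ := exists_slowlyVarying_quantile_expansion hl hτ
    (hμ.ae_pos.mono fun _ => one_le_tau hC2) (hmA ▸ mPlus_pos hμ hN hC1 hC2 hC3 hN11) hβ hqA
  obtain ⟨lB, hlB_pos, hlB_sv, hqB_eq, hlB_lim⟩ :=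
    exists_slowlyVarying_quantile_expansion (T := fun v => tau N (1 - v)) hl
      (hτ.comp (measurable_const.sub measurable_id))
      (hμ.ae_lt_one.mono fun _ hv => one_le_tau hC2 (sub_pos.2 hv))
      (hmB ▸ mMinus_pos hμ hN hC1 hC2 hC3 hN11) hγ hqB
  rw [hmA] at hlA_lim
  rw [hmB] at hlB_lim
  exact ⟨lA, lB, hlA_pos, hlB_pos, hlA_sv, hlB_sv, hqA_eq, hqB_eq, hlA_lim, hlB_lim⟩
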